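/- For every t ∈ ℂ and every nonzero integral ideal 𝔫 = 𝔫₀𝔫₁² of 𝒪, the 𝒩-transform of the arithmetic function 𝔪 ↦ N(𝔪)^t satisfies 𝒩[N^t](𝔫) = N(𝔫)^t · ∏_{v ∈ S(𝔫₁)∖S₂(𝔫)} (1 − q_v^{−2(1+t)}) · ∏_{v ∈ S₂(𝔫)} (1 − (1 − q_v^{−1})^{−1} q_v^{−2(1+t)}). -/

import Mathlib

/-! Dividing `𝔫` by `∏_{v∈I} 𝔭_v²` (for `I ⊆ S(𝔫₁)`) lowers `ord_v` by two at the places of `I`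
and nowhere else, so the norm and `ι` of the quotient differ from those of `𝔫` by factors local
at `I`; the weight `ω_v(𝔫₀)` enters only when `ord_v(𝔫) ∈ {2, 3}`, and differs from `1` only when
`ord_v(𝔫) = 2`. Hence the `I`-th term of `𝒩[N^t](𝔫)` is `N(𝔫)^t ∏_{v∈I} c_v` with `c_v` depending
only on `q_v` and `ord_v(𝔫)`, and summing over `I` gives `N(𝔫)^t ∏_{v∈S(𝔫₁)} (1 + c_v)`. -/

open NumberField UniqueFactorizationMonoid
open scoped Classical

namespace Stmt1

variable (F : Type*) [Field F] [NumberField F]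

/-- `S(𝔪)`: the set of prime ideals dividing `𝔪`. -/
noncomputable def S (𝔪 : Ideal (𝓞 F)) : Finset (Ideal (𝓞 F)) :=
  (normalizedFactors 𝔪).toFinset

/-- `ord_v(𝔪)`: the exponent of the prime `v` in `𝔪`. -/
noncomputable def ordv (v 𝔪 : Ideal (𝓞 F)) : ℕ :=
  (normalizedFactors 𝔪).count v

/-- `S_k(𝔪) = {v ∈ S(𝔪) : ord_v(𝔪) = k}`. -/
noncomputable def Sk (k : ℕ) (𝔪 : Ideal (𝓞 F)) : Finset (Ideal (𝓞 F)) :=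
  (S F 𝔪).filter fun v => ordv F v 𝔪 = k

/-- `q_v`: the cardinality of the residue field `𝒪/𝔭_v`, as a real number. -/
noncomputable def qv (v : Ideal (𝓞 F)) : ℝ := (Ideal.absNorm v : ℝ)

/-- `ω_v(𝔠) = 1` if `v ∈ S(𝔠)`, and `(q_v+1)/(q_v−1)` otherwise. -/
noncomputable def omegav (v 𝔠 : Ideal (𝓞 F)) : ℝ :=
  if v ∈ S F 𝔠 then 1 else (qv F v + 1) / (qv F v - 1)

/-- The quotient ideal `𝔫𝔟⁻¹` when `𝔟 ∣ 𝔫` (junk value `0` otherwise). -/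
noncomputable def idealDiv (𝔫 𝔟 : Ideal (𝓞 F)) : Ideal (𝓞 F) :=
  if h : ∃ 𝔠, 𝔫 = 𝔟 * 𝔠 then h.choose else 0

/-- `𝔫₁`: the unique ideal with `𝔫 = 𝔫₀𝔫₁²`, `𝔫₀` squarefree. -/
noncomputable def nOne (𝔫 : Ideal (𝓞 F)) : Ideal (𝓞 F) :=
  ∏ v ∈ S F 𝔫, v ^ (ordv F v 𝔫 / 2)

/-- `𝔫₀`: the product of the primes occurring in `𝔫` with odd exponent. -/
noncomputable def nZero (𝔫 : Ideal (𝓞 F)) : Ideal (𝓞 F) :=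
  ∏ v ∈ S F 𝔫, v ^ (ordv F v 𝔫 % 2)

/-- `ι(𝔪) = ∏_{v∈S(𝔪)} (1+q_v)·q_v^{ord_v(𝔪)−1}`. -/
noncomputable def iota (𝔪 : Ideal (𝓞 F)) : ℝ :=
  ∏ v ∈ S F 𝔪, (1 + qv F v) * qv F v ^ (ordv F v 𝔪 - 1)

/-- The `𝒩`-transform of an arithmetic function `B` (with complex values):
`𝒩[B](𝔫) = Σ_{I ⊆ S(𝔫₁)} (−1)^{#I} (∏_{v∈I∩S₁(𝔫₁)} ω_v(𝔫₀))
            (ι(𝔫∏_{v∈I}𝔭_v⁻²)/ι(𝔫)) B(𝔫∏_{v∈I}𝔭_v⁻²)`. -/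
noncomputable def Ntrans (B : Ideal (𝓞 F) → ℂ) (𝔫 : Ideal (𝓞 F)) : ℂ :=
  ∑ I ∈ (S F (nOne F 𝔫)).powerset,
    (-1 : ℂ) ^ I.card *
      (∏ v ∈ I ∩ Sk F 1 (nOne F 𝔫), (omegav F v (nZero F 𝔫) : ℂ)) *
      ((iota F (idealDiv F 𝔫 (∏ v ∈ I, v ^ 2)) / iota F 𝔫 : ℝ) : ℂ) *
      B (idealDiv F 𝔫 (∏ v ∈ I, v ^ 2))

theorem count_normalizedFactors_prod_pow {α : Type*} [CommMonoidWithZero α]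
    [NormalizationMonoid α] [UniqueFactorizationMonoid α] [Subsingleton αˣ]
    {s : Finset α} (hs : ∀ p ∈ s, Prime p) (e : α → ℕ) (q : α) :
    (normalizedFactors (∏ p ∈ s, p ^ e p)).count q = if q ∈ s then e q else 0 := by
  have hprod : ∏ p ∈ s, p ^ e p = (∑ p ∈ s, Multiset.replicate (e p) p).prod := by
    simp only [Multiset.prod_sum, Multiset.prod_replicate]
  rw [hprod, normalizedFactors_prod_of_prime, Multiset.count_sum']
  · simp [Multiset.count_replicate]
  · simp only [Multiset.mem_sum, Multiset.mem_replicate]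
    rintro p ⟨p', hp', -, rfl⟩
    exact hs p hp'

theorem natCast_prod_cpow {ι : Type*} (s : Finset ι) (f : ι → ℕ) (t : ℂ) :
    ((∏ i ∈ s, f i : ℕ) : ℂ) ^ t = ∏ i ∈ s, (f i : ℂ) ^ t := by
  induction s using Finset.cons_induction with
  | empty => simp
  | cons a s ha ih =>
    rw [Finset.prod_cons, Finset.prod_cons, Nat.cast_mul, Complex.natCast_mul_natCast_cpow, ih]

noncomputable def iotaLocal (q : ℝ) (k : ℕ) : ℝ :=
  if k = 0 then 1 else (1 + q) * q ^ (k - 1)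

lemma iotaLocal_pos {q : ℝ} (hq : 0 < q) (k : ℕ) : 0 < iotaLocal q k := by
  unfold iotaLocal
  split_ifs <;> positivity

lemma iotaLocal_sub_two_div {q : ℝ} (hq : 0 < q) {e : ℕ} (he : 2 ≤ e) :
    iotaLocal q (e - 2) / iotaLocal q e = if e = 2 then ((1 + q) * q)⁻¹ else (q ^ 2)⁻¹ := by
  obtain ⟨k, rfl⟩ : ∃ k, e = k + 2 := ⟨e - 2, by omega⟩
  rcases k with _ | k
  · simp [iotaLocal]
  · have hq' : q ^ k ≠ 0 := by positivity
    rw [iotaLocal, iotaLocal, if_neg (by omega), if_neg (by omega), if_neg (by omega),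
      show k + 1 + 2 - 2 - 1 = k by omega, show k + 1 + 2 - 1 = k + 2 by omega, pow_add]
    field_simp

lemma eq_mul_idealDiv {K : Type*} [Field K] {𝔫 𝔟 : Ideal (𝓞 K)} (h : 𝔟 ∣ 𝔫) :
    𝔫 = 𝔟 * idealDiv K 𝔫 𝔟 := by
  have h' : ∃ 𝔠, 𝔫 = 𝔟 * 𝔠 := h
  rw [idealDiv, dif_pos h']
  exact h'.choose_spec

noncomputable def localFactor (t : ℂ) (q : ℝ) (e : ℕ) : ℂ :=
  -(if e = 2 then (1 - (q : ℂ)⁻¹)⁻¹ else 1) * (q : ℂ) ^ (-2 * (1 + t))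

lemma localFactor_eq {q : ℝ} (hq : 1 < q) {e : ℕ} (he : 2 ≤ e) (t : ℂ) :
    localFactor t q e = -(((if e = 2 then (q + 1) / (q - 1) else 1 : ℝ) : ℂ) *
      ((iotaLocal q (e - 2) / iotaLocal q e : ℝ) : ℂ)) * ((q : ℂ) ^ (2 * t))⁻¹ := by
  have hq0 : (q : ℂ) ≠ 0 := Complex.ofReal_ne_zero.mpr (by linarith)
  have hq1 : (q : ℂ) - 1 ≠ 0 := by exact_mod_cast sub_ne_zero.mpr (by linarith : q ≠ 1)
  have hq1' : 1 + (q : ℂ) ≠ 0 := by exact_mod_cast (by linarith : 1 + q ≠ 0)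
  have hqt : (q : ℂ) ^ (2 * t) ≠ 0 := by
    rw [Ne, Complex.cpow_eq_zero_iff]
    exact fun h => hq0 h.1
  have hsplit : (q : ℂ) ^ (-2 * (1 + t)) = ((q : ℂ) ^ 2)⁻¹ * ((q : ℂ) ^ (2 * t))⁻¹ := by
    rw [show -2 * (1 + t) = -2 + -(2 * t) by ring, Complex.cpow_add _ _ hq0, Complex.cpow_neg,
      Complex.cpow_neg, Complex.cpow_ofNat]
  rw [localFactor, iotaLocal_sub_two_div (by linarith) he, hsplit]
  split_ifs
  · push_cast
    field_simp
    ring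
  · push_cast
    field_simp

section Ideals

variable {F}

lemma mem_S_iff {v 𝔪 : Ideal (𝓞 F)} : v ∈ S F 𝔪 ↔ ordv F v 𝔪 ≠ 0 := by
  simp [S, ordv, mem_primeFactors]

lemma prime_of_mem_S {v 𝔪 : Ideal (𝓞 F)} (h : v ∈ S F 𝔪) : Prime v :=
  prime_of_normalized_factor v (Multiset.mem_toFinset.mp h)

lemma two_le_qv {v 𝔪 : Ideal (𝓞 F)} (h : v ∈ S F 𝔪) : 2 ≤ qv F v := by
  have hv := prime_of_mem_S h
  have h0 : Ideal.absNorm v ≠ 0 := Ideal.absNorm_eq_zero_iff.not.mpr hv.ne_zero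
  have h1 : Ideal.absNorm v ≠ 1 := fun h1 =>
    hv.not_isUnit (by rwa [Ideal.absNorm_eq_one_iff, ← Ideal.one_eq_top, ← isUnit_iff_eq_one] at h1)
  rw [qv, ← Nat.cast_ofNat, Nat.cast_le]
  omega

lemma ordv_prod_pow {s : Finset (Ideal (𝓞 F))} (hs : ∀ v ∈ s, Prime v) (e : Ideal (𝓞 F) → ℕ)
    (v : Ideal (𝓞 F)) : ordv F v (∏ w ∈ s, w ^ e w) = if v ∈ s then e v else 0 :=
  count_normalizedFactors_prod_pow hs e v

lemma ordv_prod_S_pow (𝔫 : Ideal (𝓞 F)) {f : ℕ → ℕ} (hf : f 0 = 0) (v : Ideal (𝓞 F)) :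
    ordv F v (∏ w ∈ S F 𝔫, w ^ f (ordv F w 𝔫)) = f (ordv F v 𝔫) := by
  rw [ordv_prod_pow (fun _ => prime_of_mem_S)]
  split_ifs with hv
  · rfl
  · rw [mem_S_iff, not_not] at hv
    rw [hv, hf]

lemma ordv_nOne (𝔫 v : Ideal (𝓞 F)) : ordv F v (nOne F 𝔫) = ordv F v 𝔫 / 2 :=
  ordv_prod_S_pow 𝔫 (f := (· / 2)) rfl v

lemma ordv_nZero (𝔫 v : Ideal (𝓞 F)) : ordv F v (nZero F 𝔫) = ordv F v 𝔫 % 2 :=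
  ordv_prod_S_pow 𝔫 (f := (· % 2)) rfl v

lemma mem_S_nOne_iff {𝔫 v : Ideal (𝓞 F)} : v ∈ S F (nOne F 𝔫) ↔ 2 ≤ ordv F v 𝔫 := by
  rw [mem_S_iff, ordv_nOne]
  omega

lemma mem_S_nZero_iff {𝔫 v : Ideal (𝓞 F)} : v ∈ S F (nZero F 𝔫) ↔ ordv F v 𝔫 % 2 = 1 := by
  rw [mem_S_iff, ordv_nZero]
  omega

lemma mem_Sk_iff {k : ℕ} (hk : k ≠ 0) {𝔫 v : Ideal (𝓞 F)} : v ∈ Sk F k 𝔫 ↔ ordv F v 𝔫 = k := by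
  rw [Sk, Finset.mem_filter, mem_S_iff]
  omega

lemma iota_eq_prod_iotaLocal {𝔪 : Ideal (𝓞 F)} {s : Finset (Ideal (𝓞 F))} (hs : S F 𝔪 ⊆ s) :
    iota F 𝔪 = ∏ v ∈ s, iotaLocal (qv F v) (ordv F v 𝔪) := by
  rw [iota, ← Finset.prod_subset hs]
  · exact Finset.prod_congr rfl fun v hv => by rw [iotaLocal, if_neg (mem_S_iff.mp hv)]
  · intro v _ hv
    rw [iotaLocal, if_pos (not_not.mp (mem_S_iff.not.mp hv))]

variable {𝔫 : Ideal (𝓞 F)} {I : Finset (Ideal (𝓞 F))}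

lemma prod_sq_dvd (h𝔫 : 𝔫 ≠ 0) (hI : I ⊆ S F (nOne F 𝔫)) : ∏ v ∈ I, v ^ 2 ∣ 𝔫 := by
  have hprime : ∀ v ∈ I, Prime v := fun v hv => prime_of_mem_S (hI hv)
  have hP : ∏ v ∈ I, v ^ 2 ≠ 0 :=
    Finset.prod_ne_zero_iff.mpr fun v hv => pow_ne_zero _ (hprime v hv).ne_zero
  rw [dvd_iff_normalizedFactors_le_normalizedFactors hP h𝔫, Multiset.le_iff_count]
  intro v
  rw [← ordv, ← ordv, ordv_prod_pow hprime]
  split_ifs with hv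
  · exact mem_S_nOne_iff.mp (hI hv)
  · exact Nat.zero_le _

lemma ordv_idealDiv_prod_sq (h𝔫 : 𝔫 ≠ 0) (hI : I ⊆ S F (nOne F 𝔫)) (v : Ideal (𝓞 F)) :
    ordv F v (idealDiv F 𝔫 (∏ w ∈ I, w ^ 2)) = ordv F v 𝔫 - if v ∈ I then 2 else 0 := by
  have hspec := eq_mul_idealDiv (prod_sq_dvd h𝔫 hI)
  have hQ : idealDiv F 𝔫 (∏ w ∈ I, w ^ 2) ≠ 0 := by
    rintro hQ
    rw [hQ, mul_zero] at hspec
    exact h𝔫 hspec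
  have hP : ∏ w ∈ I, w ^ 2 ≠ 0 := left_ne_zero_of_mul (hspec ▸ h𝔫)
  conv_rhs => rw [ordv, hspec, normalizedFactors_mul hP hQ, Multiset.count_add, ← ordv, ← ordv,
    ordv_prod_pow fun w hw => prime_of_mem_S (hI hw)]
  omega

lemma iota_idealDiv_prod_sq_div (h𝔫 : 𝔫 ≠ 0) (hI : I ⊆ S F (nOne F 𝔫)) :
    iota F (idealDiv F 𝔫 (∏ w ∈ I, w ^ 2)) / iota F 𝔫 =
      ∏ v ∈ I, iotaLocal (qv F v) (ordv F v 𝔫 - 2) / iotaLocal (qv F v) (ordv F v 𝔫) := by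
  have hsub : S F (idealDiv F 𝔫 (∏ w ∈ I, w ^ 2)) ⊆ S F 𝔫 := fun v hv => by
    rw [mem_S_iff, ordv_idealDiv_prod_sq h𝔫 hI] at hv
    rw [mem_S_iff]
    omega
  have hIS : I ⊆ S F 𝔫 := fun v hv => mem_S_iff.mpr (by have := mem_S_nOne_iff.mp (hI hv); omega)
  rw [iota_eq_prod_iotaLocal hsub, iota_eq_prod_iotaLocal subset_rfl, ← Finset.prod_div_distrib,
    ← Finset.prod_subset hIS]
  · refine Finset.prod_congr rfl fun v hv => ?_
    rw [ordv_idealDiv_prod_sq h𝔫 hI, if_pos hv]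
  · intro v hv hvI
    rw [ordv_idealDiv_prod_sq h𝔫 hI, if_neg hvI, Nat.sub_zero,
      div_self (iotaLocal_pos (by linarith [two_le_qv hv]) _).ne']

lemma absNorm_cpow_eq_prod_mul (h𝔫 : 𝔫 ≠ 0) (hI : I ⊆ S F (nOne F 𝔫)) (t : ℂ) :
    (Ideal.absNorm 𝔫 : ℂ) ^ t = (∏ v ∈ I, (qv F v : ℂ) ^ (2 * t)) *
      (Ideal.absNorm (idealDiv F 𝔫 (∏ w ∈ I, w ^ 2)) : ℂ) ^ t := by
  conv_lhs => rw [eq_mul_idealDiv (prod_sq_dvd h𝔫 hI)]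
  rw [map_mul, map_prod, Nat.cast_mul, Complex.natCast_mul_natCast_cpow, natCast_prod_cpow]
  congr 1
  refine Finset.prod_congr rfl fun v _ => ?_
  rw [map_pow, Nat.cast_pow, qv, Complex.ofReal_natCast, ← Complex.natCast_cpow_natCast_mul]
  norm_cast

lemma ite_omegav_eq {v : Ideal (𝓞 F)} (hv : v ∈ S F (nOne F 𝔫)) :
    (if v ∈ Sk F 1 (nOne F 𝔫) then omegav F v (nZero F 𝔫) else 1) =
      if ordv F v 𝔫 = 2 then (qv F v + 1) / (qv F v - 1) else 1 := by
  have he := mem_S_nOne_iff.mp hv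
  simp only [mem_Sk_iff one_ne_zero, ordv_nOne, omegav, mem_S_nZero_iff]
  split_ifs <;> first | rfl | omega

lemma Ntrans_term_eq (h𝔫 : 𝔫 ≠ 0) (hI : I ⊆ S F (nOne F 𝔫)) (t : ℂ) :
    (-1 : ℂ) ^ I.card * (∏ v ∈ I ∩ Sk F 1 (nOne F 𝔫), (omegav F v (nZero F 𝔫) : ℂ)) *
      ((iota F (idealDiv F 𝔫 (∏ v ∈ I, v ^ 2)) / iota F 𝔫 : ℝ) : ℂ) *
      (Ideal.absNorm (idealDiv F 𝔫 (∏ v ∈ I, v ^ 2)) : ℂ) ^ t =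
    (Ideal.absNorm 𝔫 : ℂ) ^ t * ∏ v ∈ I, localFactor t (qv F v) (ordv F v 𝔫) := by
  have hlocal : ∀ v ∈ I, localFactor t (qv F v) (ordv F v 𝔫) =
      -1 * (if v ∈ Sk F 1 (nOne F 𝔫) then (omegav F v (nZero F 𝔫) : ℂ) else 1) *
        ((iotaLocal (qv F v) (ordv F v 𝔫 - 2) / iotaLocal (qv F v) (ordv F v 𝔫) : ℝ) : ℂ) *
        ((qv F v : ℂ) ^ (2 * t))⁻¹ := fun v hv => by
    rw [localFactor_eq (by linarith [two_le_qv (hI hv)]) (mem_S_nOne_iff.mp (hI hv)),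
      ← ite_omegav_eq (hI hv)]
    split_ifs <;> push_cast <;> ring
  have hpow : ∏ v ∈ I, (qv F v : ℂ) ^ (2 * t) ≠ 0 := Finset.prod_ne_zero_iff.mpr fun v hv => by
    rw [Ne, Complex.cpow_eq_zero_iff, Complex.ofReal_eq_zero]
    exact fun h => by linarith [two_le_qv (hI hv), h.1]
  rw [absNorm_cpow_eq_prod_mul h𝔫 hI t, iota_idealDiv_prod_sq_div h𝔫 hI,
    Finset.prod_congr rfl hlocal, Finset.prod_mul_distrib, Finset.prod_mul_distrib,
    Finset.prod_mul_distrib, Finset.prod_const, Finset.prod_ite_mem, Finset.prod_inv_distrib, Complex.ofReal_prod]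
  field_simp

end Ideals

theorem statement1
    (t : ℂ) (𝔫 : Ideal (𝓞 F)) (h𝔫 : 𝔫 ≠ 0) :
    Ntrans F (fun 𝔪 => (Ideal.absNorm 𝔪 : ℂ) ^ t) 𝔫 =
      (Ideal.absNorm 𝔫 : ℂ) ^ t *
        (∏ v ∈ S F (nOne F 𝔫) \ Sk F 2 𝔫, (1 - (qv F v : ℂ) ^ (-2 * (1 + t)))) *
        (∏ v ∈ Sk F 2 𝔫, (1 - (1 - (qv F v : ℂ)⁻¹)⁻¹ * (qv F v : ℂ) ^ (-2 * (1 + t)))) := by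
  have hS2 : Sk F 2 𝔫 ⊆ S F (nOne F 𝔫) := fun v hv =>
    mem_S_nOne_iff.mpr ((mem_Sk_iff two_ne_zero).mp hv).ge
  have hsum : Ntrans F (fun 𝔪 => (Ideal.absNorm 𝔪 : ℂ) ^ t) 𝔫 = (Ideal.absNorm 𝔫 : ℂ) ^ t *
      ∏ v ∈ S F (nOne F 𝔫), (1 + localFactor t (qv F v) (ordv F v 𝔫)) := by
    rw [Finset.prod_one_add, Finset.mul_sum]
    exact Finset.sum_congr rfl fun I hI => Ntrans_term_eq h𝔫 (Finset.mem_powerset.mp hI) t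
  rw [hsum, ← Finset.prod_sdiff hS2, mul_assoc]
  congr 2 <;> refine Finset.prod_congr rfl fun v hv => ?_
  · have he : ordv F v 𝔫 ≠ 2 := fun he =>
      (Finset.mem_sdiff.mp hv).2 ((mem_Sk_iff two_ne_zero).mpr he)
    rw [localFactor, if_neg he]
    ring
  · rw [localFactor, if_pos ((mem_Sk_iff two_ne_zero).mp hv)]
    ring

end Stmt1
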